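/- arXiv:1702.03691 — 7 statements merged into one kernel-verified Lean document; each statement's English description precedes it below -/
import Mathlib

section
/- If a weight m with m_1 = 1 is block-convex, then m is strongly submultiplicative with constant 1: m_k m_l ≤ m_{k+l-1} for all k, l ≥ 1. -/
/-- A block-convex weight with `m 1 = 1` is strongly submultiplicative with
constant `1`: `m k * m l ≤ m (k + l - 1)`. -/
theorem stmt_4 (α : ℕ → ℝ) (hα1 : α 1 = 1) (hαpos : ∀ n, 1 ≤ n → 0 < α n)
    (m : ℕ → ℝ) (hm : ∀ n, 1 ≤ n → m n = ∏ i ∈ Finset.Icc 1 n, α i)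
    (hblock : ∀ ν k l : ℕ, 1 ≤ k → k ≤ 2 ^ ν → 2 ^ ν < l → α k ≤ α l) :
    ∀ k l : ℕ, 1 ≤ k → 1 ≤ l → m k * m l ≤ m (k + l - 1) := by
  have hmain : ∀ k l : ℕ, 1 ≤ k → 1 ≤ l → k ≤ l → m k * m l ≤ m (k + l - 1) := by
    intro k l hk hl hkl
    have hkl1 : 1 ≤ k + l - 1 := by omega
    rw [hm k hk, hm l hl, hm _ hkl1]
    have hIcc : ∀ n : ℕ, Finset.Icc 1 n = Finset.Ioc 0 n := fun n => rfl
    simp only [hIcc]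
    have hsplit : ∏ i ∈ Finset.Ioc 0 (k + l - 1), α i =
        (∏ i ∈ Finset.Ioc 0 l, α i) * ∏ i ∈ Finset.Ioc l (k + l - 1), α i :=
      (Finset.prod_Ioc_consecutive α (Nat.zero_le l) (by omega)).symm
    have hk1 : ∏ i ∈ Finset.Ioc 0 k, α i = ∏ i ∈ Finset.Ioc 1 k, α i := by
      rw [← Finset.prod_Ioc_consecutive α (Nat.zero_le 1) hk]
      simp [hα1]
    rw [hsplit, hk1]
    have hmap : ∏ i ∈ Finset.Ioc l (k + l - 1), α i =
        ∏ i ∈ Finset.Ioc 1 k, α (l - 1 + i) := by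
      have e : Finset.Ioc l (k + l - 1) = Finset.Ioc (l - 1 + 1) (l - 1 + k) := by
        congr 1 <;> omega
      rw [e, ← Finset.map_add_left_Ioc, Finset.prod_map]
      rfl
    have hle : ∏ i ∈ Finset.Ioc 1 k, α i ≤ ∏ i ∈ Finset.Ioc l (k + l - 1), α i := by
      rw [hmap]
      apply Finset.prod_le_prod
      · intro i hi
        simp only [Finset.mem_Ioc] at hi
        exact (hαpos i (by omega)).le
      · intro i hi
        simp only [Finset.mem_Ioc] at hi
        set ν := Nat.clog 2 i with hν
        have h1 : i ≤ 2 ^ ν := Nat.le_pow_clog (by norm_num) i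
        have h2 : 2 ^ (ν - 1) < i := Nat.pow_pred_clog_lt_self (by norm_num) (by omega)
        have hν1 : 1 ≤ ν := by
          by_contra h
          have : ν = 0 := by omega
          rw [this] at h1; simp at h1; omega
        have h3 : 2 ^ ν = 2 * 2 ^ (ν - 1) := by
          rw [← pow_succ']
          congr 1
          omega
        exact hblock ν i (l - 1 + i) (by omega) h1 (by omega)
    have hnn : 0 ≤ ∏ i ∈ Finset.Ioc 0 l, α i :=
      Finset.prod_nonneg fun i hi => (hαpos i (by
        simp only [Finset.mem_Ioc] at hi; omega)).le
    calc (∏ i ∈ Finset.Ioc 1 k, α i) * ∏ i ∈ Finset.Ioc 0 l, α i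
        = (∏ i ∈ Finset.Ioc 0 l, α i) * ∏ i ∈ Finset.Ioc 1 k, α i := mul_comm _ _
      _ ≤ (∏ i ∈ Finset.Ioc 0 l, α i) * ∏ i ∈ Finset.Ioc l (k + l - 1), α i :=
          mul_le_mul_of_nonneg_left hle hnn
  intro k l hk hl
  rcases le_total k l with h | h
  · exact hmain k l hk hl h
  · have := hmain l k hl hk h
    rw [mul_comm] at this
    have e : l + k - 1 = k + l - 1 := by omega
    rwa [e] at this
end

section
/- If a weight m is strongly submultiplicative (m_k m_l ≤ λ m_{k+l-1} for all k,l ≥ 1), then m is strictly FdB: for all r ≥ 1 and k_1,…,k_r ≥ 1, m_r m_{k_1} ⋯ m_{k_r} ≤ λ^r m_{k_1+⋯+k_r}. -/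
private lemma stmt5_aux (m : ℕ → ℝ) (hm : ∀ n, 1 ≤ n → 0 < m n) (lam : ℝ) (hlam : 1 ≤ lam)
    (hssm : ∀ k l : ℕ, 1 ≤ k → 1 ≤ l → m k * m l ≤ lam * m (k + l - 1)) :
    ∀ ks : List ℕ, (∀ i ∈ ks, 1 ≤ i) → ∀ a : ℕ, 1 ≤ a →
      m a * (ks.map m).prod ≤ lam ^ ks.length * m (a + ks.sum - ks.length) := by
  intro ks
  induction ks with
  | nil =>
    intro _ a ha
    simp [le_of_lt (hm a ha)]
  | cons k t ih =>
    intro hks a ha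
    have hk : 1 ≤ k := hks k (by simp)
    have ht : ∀ i ∈ t, 1 ≤ i := fun i hi => hks i (by simp [hi])
    have hsumlen : t.length ≤ t.sum := List.length_le_sum_of_one_le t ht
    have hlam0 : 0 < lam := lt_of_lt_of_le one_pos hlam
    have hP : 0 < (t.map m).prod := by
      apply List.prod_pos
      intro x hx
      obtain ⟨i, hi, rfl⟩ := List.mem_map.mp hx
      exact hm i (ht i hi)
    have h1 : m a * m k ≤ lam * m (a + k - 1) := hssm a k ha hk
    have h2 := ih ht (a + k - 1) (by omega)
    have key : a + k - 1 + t.sum - t.length = a + (k :: t).sum - (k :: t).length := by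
      simp only [List.sum_cons, List.length_cons]
      omega
    calc m a * ((k :: t).map m).prod
        = (m a * m k) * (t.map m).prod := by
          simp [List.map_cons, List.prod_cons]; ring
      _ ≤ (lam * m (a + k - 1)) * (t.map m).prod := by
          exact mul_le_mul_of_nonneg_right h1 hP.le
      _ = lam * (m (a + k - 1) * (t.map m).prod) := by ring
      _ ≤ lam * (lam ^ t.length * m (a + k - 1 + t.sum - t.length)) := by
          exact mul_le_mul_of_nonneg_left h2 hlam0.le
      _ = lam ^ (k :: t).length * m (a + (k :: t).sum - (k :: t).length) := by
          rw [key, List.length_cons, pow_succ]; ring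

/-- A strongly submultiplicative weight is strictly FdB. -/
theorem stmt_5 (m : ℕ → ℝ) (hm : ∀ n, 1 ≤ n → 0 < m n) (lam : ℝ) (hlam : 1 ≤ lam)
    (hssm : ∀ k l : ℕ, 1 ≤ k → 1 ≤ l → m k * m l ≤ lam * m (k + l - 1)) :
    ∀ ks : List ℕ, ks ≠ [] → (∀ i ∈ ks, 1 ≤ i) →
      m ks.length * (ks.map m).prod ≤ lam ^ ks.length * m ks.sum := by
  intro ks hne hks
  have hlen : 1 ≤ ks.length := by
    cases ks with
    | nil => exact absurd rfl hne
    | cons a t => simp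
  have := stmt5_aux m hm lam hlam hssm ks hks ks.length hlen
  rwa [Nat.add_sub_cancel_left] at this
end

section
/- Suppose the weight m is FdB. Then m is almost submultiplicative if and only if α := inf_{n≥1} m_n^{1/n} > 0. -/
/-!
Repeating the index `1` in the almost-submultiplicativity inequality gives `m₁ⁿ ≤ μⁿ mₙ`, so
`m₁ / μ` is a positive lower bound for `mₙ^{1/n}`. Conversely, if `bⁿ ≤ mₙ` with `0 < b ≤ 1`,
then in the FdB inequality the factor `m_r` is at least `b^r ≥ b^k` (as `r ≤ k`), and dividing it
out shows that `m` is almost submultiplicative with constant `λ / b`.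
-/

-- `ks = [k₁, …, k_r]`, so that `r = ks.length` and `k = ks.sum`.
def IsFdBWith (m : ℕ → ℝ) (lam : ℝ) : Prop :=
  ∀ ks : List ℕ, ks ≠ [] → (∀ i ∈ ks, 1 ≤ i) →
    m ks.length * (ks.map m).prod ≤ lam ^ ks.sum * m ks.sum

def IsAlmostSubmultiplicativeWith (m : ℕ → ℝ) (lam : ℝ) : Prop :=
  ∀ ks : List ℕ, ks ≠ [] → (∀ i ∈ ks, 1 ≤ i) →
    (ks.map m).prod ≤ lam ^ ks.sum * m ks.sum

lemma le_rpow_one_div_natCast_iff {c x : ℝ} {n : ℕ} (hc : 0 ≤ c) (hx : 0 ≤ x) (hn : n ≠ 0) :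
    c ≤ x ^ (1 / (n : ℝ)) ↔ c ^ n ≤ x := by
  rw [one_div, Real.le_rpow_inv_iff_of_pos hc hx (by positivity), Real.rpow_natCast]

lemma IsAlmostSubmultiplicativeWith.pow_one_le {m : ℕ → ℝ} {μ : ℝ}
    (h : IsAlmostSubmultiplicativeWith m μ) {n : ℕ} (hn : 1 ≤ n) :
    m 1 ^ n ≤ μ ^ n * m n := by
  simpa using h (List.replicate n 1) (by simp; omega) (by simp)

lemma IsFdBWith.isAlmostSubmultiplicativeWith_div {m : ℕ → ℝ} {lam b : ℝ}
    (h : IsFdBWith m lam) (hb : 0 < b) (hb1 : b ≤ 1) (hbm : ∀ n, 1 ≤ n → b ^ n ≤ m n) :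
    IsAlmostSubmultiplicativeWith m (lam / b) := by
  intro ks hne hks
  have hlen : 1 ≤ ks.length := List.length_pos_iff.mpr hne
  have hbk : b ^ ks.sum ≤ m ks.length :=
    (pow_le_pow_of_le_one hb.le hb1 (ks.length_le_sum_of_one_le hks)).trans (hbm _ hlen)
  have hprod : 0 ≤ (ks.map m).prod :=
    List.prod_nonneg fun x hx => by
      obtain ⟨i, hi, rfl⟩ := List.mem_map.mp hx
      exact (pow_pos hb i).le.trans (hbm i (hks i hi))
  rw [div_pow, div_mul_eq_mul_div, le_div_iff₀ (by positivity)]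
  calc (ks.map m).prod * b ^ ks.sum
      ≤ m ks.length * (ks.map m).prod := by
        rw [mul_comm]; exact mul_le_mul_of_nonneg_right hbk hprod
    _ ≤ lam ^ ks.sum * m ks.sum := h ks hne hks

/-- Suppose the weight `m` is FdB. Then `m` is almost submultiplicative iff
`inf_{n ≥ 1} m_n^{1/n} > 0`. -/
theorem stmt_7 (m : ℕ → ℝ) (hm : ∀ n, 1 ≤ n → 0 < m n)
    (hfdb : ∃ lam : ℝ, 1 ≤ lam ∧ ∀ ks : List ℕ, ks ≠ [] → (∀ i ∈ ks, 1 ≤ i) →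
      m ks.length * (ks.map m).prod ≤ lam ^ ks.sum * m ks.sum) :
    (∃ lam : ℝ, 1 ≤ lam ∧ ∀ ks : List ℕ, ks ≠ [] → (∀ i ∈ ks, 1 ≤ i) →
      (ks.map m).prod ≤ lam ^ ks.sum * m ks.sum)
    ↔ (∃ a : ℝ, 0 < a ∧ ∀ n, 1 ≤ n → a ≤ m n ^ (1 / (n : ℝ))) := by
  constructor
  · rintro ⟨μ, hμ, hasm⟩
    have hμ0 : 0 < μ := one_pos.trans_le hμ
    have hm1 := hm 1 le_rfl
    refine ⟨m 1 / μ, by positivity, fun n hn => ?_⟩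
    rw [le_rpow_one_div_natCast_iff (by positivity) (hm n hn).le (by omega), div_pow,
      div_le_iff₀ (by positivity), mul_comm]
    exact IsAlmostSubmultiplicativeWith.pow_one_le hasm hn
  · rintro ⟨a, ha, hbound⟩
    obtain ⟨lam, hlam, hfdb⟩ := hfdb
    have hb : 0 < min a 1 := lt_min ha one_pos
    refine ⟨lam / min a 1, (one_le_div hb).mpr (min_le_right a 1 |>.trans hlam),
      IsFdBWith.isAlmostSubmultiplicativeWith_div hfdb hb (min_le_right a 1) fun n hn => ?_⟩
    calc min a 1 ^ n ≤ a ^ n := pow_le_pow_left₀ hb.le (min_le_left a 1) n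
      _ ≤ m n := (le_rpow_one_div_natCast_iff ha.le (hm n hn).le (by omega)).mp (hbound n hn)
end

section
/- A weight m is FdB if and only if its left shift m′ defined by m′_n = m_{n+1} is almost submultiplicative. (Forward direction: if m′ is ASM with constant λ then, setting m′_0 := m_1, for r ≥ 2 and k_1,…,k_r ≥ 1, m_r m_{k_1}⋯m_{k_r} = m′_{r-1} m′_{k_1-1}⋯m′_{k_r-1} ≤ λ^{k-1} m′_{k-1} = λ^{k-1} m_k.) -/
/-!
Parts equal to `1` cost only a factor `m 1` each. Discarding them and lowering every other part
by one, `m r * ∏ m kᵢ` becomes `m′ (r - 1) * ∏ m′ (kᵢ - 1)` over a composition of `k - 1`, so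
almost submultiplicativity of `m′` gives the FdB inequality.

Conversely, the FdB inequality with `g + 1` parts `a₀ + 1, …, a_g + 1` reads
`m′ g * ∏ m′ aᵢ ≤ λ ^ (g + ∑ aᵢ + 1) * m′ (g + ∑ aᵢ)`: the factor `m′ g` absorbs `g + 1` further
factors. Starting from `g = k₁`, absorb the following parts in blocks (padding the last block with
parts `1`, which costs powers of `(m 1)⁻¹`). Each block costs a power of `λ` that is paid for by
the growth `∑ aᵢ ≥ g + 1` of the head, so the total exponent stays below `3 k`.
-/

/-- The composition `k = k₁ + ⋯ + k_r` is encoded by the list `[k₁, …, k_r]`. -/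
def IsFdB (m : ℕ → ℝ) (lam : ℝ) : Prop :=
  ∀ ks : List ℕ, ks ≠ [] → (∀ i ∈ ks, 1 ≤ i) →
    m ks.length * (ks.map m).prod ≤ lam ^ ks.sum * m ks.sum

def IsAlmostSubmultiplicative (m : ℕ → ℝ) (lam : ℝ) : Prop :=
  ∀ ks : List ℕ, ks ≠ [] → (∀ i ∈ ks, 1 ≤ i) → (ks.map m).prod ≤ lam ^ ks.sum * m ks.sum

theorem List.exists_perm_map_add_one_append_replicate_one {ks : List ℕ}
    (hks : ∀ i ∈ ks, 1 ≤ i) :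
    ∃ (S : List ℕ) (z : ℕ), ks.Perm (S.map (· + 1) ++ replicate z 1) ∧ ∀ i ∈ S, 1 ≤ i := by
  refine ⟨(ks.filter (2 ≤ ·)).map (· - 1), ks.count 1, ?_, ?_⟩
  · have hbig : ((ks.filter (2 ≤ ·)).map (· - 1)).map (· + 1) = ks.filter (2 ≤ ·) := by
      rw [map_map, map_congr_left (g := id), map_id]
      intro i hi
      have := of_decide_eq_true (mem_filter.mp hi).2
      simp only [Function.comp_apply, id]
      omega
    have hones : ks.filter (fun i => !decide (2 ≤ i)) = replicate (ks.count 1) 1 := by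
      rw [← filter_eq]
      refine filter_congr fun i hi => ?_
      obtain rfl | h : i = 1 ∨ 2 ≤ i := by have := hks i hi; omega
      · simp
      · simp [h, show i ≠ 1 by omega]
    have := (filter_append_perm (fun i => decide (2 ≤ i)) ks).symm
    rwa [hones, ← hbig] at this
  · intro i hi
    obtain ⟨k, hk, rfl⟩ := mem_map.mp hi
    have := of_decide_eq_true (mem_filter.mp hk).2
    omega

section

variable {m : ℕ → ℝ} {lam c : ℝ}

theorem IsFdB.mul_prod_shift_le_of_length_le (hF : IsFdB m lam) (hm : ∀ n, 0 ≤ m (n + 1))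
    (hlam : 0 ≤ lam) (hc : 1 ≤ c) (hmc : 1 ≤ m 1 * c) {g : ℕ} {ks : List ℕ}
    (hlen : ks.length ≤ g + 1) :
    m (g + 1) * (ks.map fun n => m (n + 1)).prod
      ≤ (lam * c) ^ (g + ks.sum + 1) * m (g + ks.sum + 1) := by
  set j := g + 1 - ks.length
  set P := (ks.map fun n => m (n + 1)).prod
  set L := ks.map (· + 1) ++ List.replicate j 1
  have hLlen : L.length = g + 1 := by simp [L]; omega
  have hLsum : L.sum = g + ks.sum + 1 := by simp [L, List.sum_map_add]; omega
  have hLprod : (L.map m).prod = P * m 1 ^ j := by simp [L, P, Function.comp_def]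
  have hFL := hF L (by rw [← List.length_pos_iff]; omega) (by simp [L]; omega)
  rw [hLlen, hLsum, hLprod] at hFL
  have hP : 0 ≤ m (g + 1) * P :=
    mul_nonneg (hm g) (List.prod_nonneg (by simpa using fun n _ => hm n))
  calc m (g + 1) * P ≤ m (g + 1) * P * (m 1 * c) ^ j :=
        le_mul_of_one_le_right hP (one_le_pow₀ hmc)
    _ = m (g + 1) * (P * m 1 ^ j) * c ^ j := by ring
    _ ≤ lam ^ (g + ks.sum + 1) * m (g + ks.sum + 1) * c ^ j := by gcongr
    _ ≤ lam ^ (g + ks.sum + 1) * m (g + ks.sum + 1) * c ^ (g + ks.sum + 1) := by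
        gcongr
        · exact mul_nonneg (by positivity) (hm _)
        · omega
    _ = _ := by ring

theorem IsFdB.mul_prod_shift_le (hF : IsFdB m lam) (hm : ∀ n, 0 ≤ m (n + 1)) (hlam : 1 ≤ lam)
    (hc : 1 ≤ c) (hmc : 1 ≤ m 1 * c) (g : ℕ) (ks : List ℕ) (hks : ∀ i ∈ ks, 1 ≤ i) :
    m (g + 1) * (ks.map fun n => m (n + 1)).prod
      ≤ (lam * c) ^ (g + 3 * ks.sum + 1) * m (g + ks.sum + 1) := by
  have hν : 1 ≤ lam * c := one_le_mul_of_one_le_of_one_le hlam hc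
  by_cases hlen : ks.length ≤ g + 1
  · refine (hF.mul_prod_shift_le_of_length_le hm (by linarith) hc hmc hlen).trans ?_
    exact mul_le_mul_of_nonneg_right (pow_le_pow_right₀ hν (by omega)) (hm _)
  set A := ks.take (g + 1)
  set B := ks.drop (g + 1)
  have hAB : ks = A ++ B := (List.take_append_drop _ _).symm
  have hAlen : A.length = g + 1 := by simp only [A, List.length_take]; omega
  have hA : g + 1 ≤ A.sum :=
    hAlen ▸ List.length_le_sum_of_one_le A fun i hi => hks i (List.take_subset _ _ hi)
  have hmerge := hF.mul_prod_shift_le_of_length_le hm (by linarith) hc hmc hAlen.le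
  have hrec := IsFdB.mul_prod_shift_le hF hm hlam hc hmc (g + A.sum) B
    fun i hi => hks i (List.drop_subset _ _ hi)
  have hsum : ks.sum = A.sum + B.sum := by rw [hAB, List.sum_append]
  have hPB : 0 ≤ (B.map fun n => m (n + 1)).prod :=
    List.prod_nonneg (by simpa using fun n _ => hm n)
  calc m (g + 1) * (ks.map fun n => m (n + 1)).prod
      = m (g + 1) * (A.map fun n => m (n + 1)).prod * (B.map fun n => m (n + 1)).prod := by
        rw [hAB, List.map_append, List.prod_append, mul_assoc]
    _ ≤ (lam * c) ^ (g + A.sum + 1) * m (g + A.sum + 1) * (B.map fun n => m (n + 1)).prod := by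
        gcongr
    _ = (lam * c) ^ (g + A.sum + 1) * (m (g + A.sum + 1) * (B.map fun n => m (n + 1)).prod) := by
        ring
    _ ≤ (lam * c) ^ (g + A.sum + 1) * ((lam * c) ^ (g + A.sum + 3 * B.sum + 1)
          * m (g + A.sum + B.sum + 1)) := by
        gcongr
    _ = (lam * c) ^ (2 * g + 2 * A.sum + 3 * B.sum + 2) * m (g + ks.sum + 1) := by
        rw [← mul_assoc, ← pow_add, hsum, ← add_assoc]
        ring_nf
    _ ≤ (lam * c) ^ (g + 3 * ks.sum + 1) * m (g + ks.sum + 1) :=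
        mul_le_mul_of_nonneg_right (pow_le_pow_right₀ hν (by omega)) (hm _)
termination_by ks.length
decreasing_by simp only [List.length_drop]; omega

theorem IsFdB.isAlmostSubmultiplicative_shift (hm : ∀ n, 1 ≤ n → 0 < m n) (hlam : 1 ≤ lam)
    (hF : IsFdB m lam) :
    IsAlmostSubmultiplicative (fun n => m (n + 1)) ((lam * max 1 (m 1)⁻¹) ^ 3) := by
  have hmc : 1 ≤ m 1 * max 1 (m 1)⁻¹ := by
    rw [← mul_inv_cancel₀ (hm 1 le_rfl).ne']
    exact mul_le_mul_of_nonneg_left (le_max_right _ _) (hm 1 le_rfl).le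
  have hν : 1 ≤ lam * max 1 (m 1)⁻¹ := one_le_mul_of_one_le_of_one_le hlam (le_max_left _ _)
  intro ks hne hks
  obtain ⟨g, ks, rfl⟩ := List.exists_cons_of_ne_nil hne
  have hg : 1 ≤ g := hks g List.mem_cons_self
  have := hF.mul_prod_shift_le (fun n => (hm (n + 1) (Nat.le_add_left 1 n)).le) hlam
    (le_max_left _ _) hmc g ks fun i hi => hks i (List.mem_cons_of_mem g hi)
  simp only [List.map_cons, List.prod_cons, List.sum_cons]
  rw [← pow_mul]
  exact this.trans
    (mul_le_mul_of_nonneg_right (pow_le_pow_right₀ hν (by omega)) (hm _ (by omega)).le)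

theorem IsAlmostSubmultiplicative.isFdB_of_shift (hm : ∀ n, 1 ≤ n → 0 < m n) (hlam : 1 ≤ lam)
    (hA : IsAlmostSubmultiplicative (fun n => m (n + 1)) lam) : IsFdB m (lam * max 1 (m 1)) := by
  set d := max 1 (m 1)
  have hd : 1 ≤ d := le_max_left _ _
  have hν : 1 ≤ lam * d := one_le_mul_of_one_le_of_one_le hlam hd
  intro ks hne hks
  have hmk : 0 < m ks.sum := hm _ ((List.length_pos_iff.mpr hne).trans_le
    (List.length_le_sum_of_one_le ks hks))
  obtain hr | hr : ks.length = 1 ∨ 2 ≤ ks.length := by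
    have := List.length_pos_iff.mpr hne; omega
  · obtain ⟨a, rfl⟩ := List.length_eq_one_iff.mp hr
    have ha : 1 ≤ a := hks a (List.mem_singleton_self a)
    simp only [List.length_singleton, List.map_cons, List.map_nil, List.prod_singleton,
      List.sum_singleton] at hmk ⊢
    gcongr
    calc m 1 ≤ d := le_max_right _ _
      _ ≤ lam * d := le_mul_of_one_le_left (by positivity) hlam
      _ ≤ (lam * d) ^ a := le_self_pow₀ hν (by omega)
  obtain ⟨S, z, hperm, hS⟩ := List.exists_perm_map_add_one_append_replicate_one hks
  have hlen : ks.length = S.length + z := by simp [hperm.length_eq]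
  have hsum : ks.sum = S.sum + S.length + z := by simp [hperm.sum_eq, List.sum_map_add]
  have hprod : (ks.map m).prod = (S.map fun n => m (n + 1)).prod * m 1 ^ z := by
    simp [(hperm.map m).prod_eq, Function.comp_def]
  have hAS := hA ((ks.length - 1) :: S) (List.cons_ne_nil _ _) (by
    simp only [List.mem_cons, forall_eq_or_imp]; exact ⟨by omega, hS⟩)
  simp only [List.map_cons, List.prod_cons, List.sum_cons] at hAS
  rw [show ks.length - 1 + 1 = ks.length by omega,
    show ks.length - 1 + S.sum + 1 = ks.sum by omega] at hAS
  calc m ks.length * (ks.map m).prod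
      = m ks.length * (S.map fun n => m (n + 1)).prod * m 1 ^ z := by rw [hprod, mul_assoc]
    _ ≤ lam ^ (ks.length - 1 + S.sum) * m ks.sum * d ^ z :=
        mul_le_mul hAS (pow_le_pow_left₀ (hm 1 le_rfl).le (le_max_right _ _) z)
          (pow_nonneg (hm 1 le_rfl).le z) (by positivity)
    _ ≤ lam ^ ks.sum * m ks.sum * d ^ ks.sum := by
        gcongr <;> first | assumption | omega
    _ = (lam * d) ^ ks.sum * m ks.sum := by ring

end

/-- A weight `m` is FdB iff its left shift `m′ n = m (n + 1)` is almost
submultiplicative. -/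
theorem stmt_10 (m : ℕ → ℝ) (hm : ∀ n, 1 ≤ n → 0 < m n) :
    (∃ lam : ℝ, 1 ≤ lam ∧ ∀ ks : List ℕ, ks ≠ [] → (∀ i ∈ ks, 1 ≤ i) →
      m ks.length * (ks.map m).prod ≤ lam ^ ks.sum * m ks.sum)
    ↔
    (∃ lam : ℝ, 1 ≤ lam ∧ ∀ ks : List ℕ, ks ≠ [] → (∀ i ∈ ks, 1 ≤ i) →
      (ks.map fun n => m (n + 1)).prod ≤ lam ^ ks.sum * m (ks.sum + 1)) := by
  show (∃ lam, 1 ≤ lam ∧ IsFdB m lam) ↔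
    ∃ lam, 1 ≤ lam ∧ IsAlmostSubmultiplicative (fun n => m (n + 1)) lam
  constructor
  · rintro ⟨lam, hlam, hF⟩
    exact ⟨_, one_le_pow₀ (one_le_mul_of_one_le_of_one_le hlam (le_max_left _ _)),
      hF.isAlmostSubmultiplicative_shift hm hlam⟩
  · rintro ⟨lam, hlam, hA⟩
    exact ⟨_, one_le_mul_of_one_le_of_one_le hlam (le_max_left _ _),
      hA.isFdB_of_shift hm hlam⟩
end

section
/- (Main composition lemma for formal power series, 1-dimensional case.) Let g(z) = Σ_{l≥1} g_l z^l and h(x) = Σ_{k≥1} h_k x^k be formal power series over ℂ without constant term. Suppose w, m are weights with w_l m_{k_1}⋯m_{k_l} ≤ λ^k m_k for all l ≥ 1 and k_1,…,k_l ≥ 1 with k_1+⋯+k_l = k. Then for every n ≥ 1, the n-th coefficient c_n of g∘h satisfies |c_n|/m_n ≤ λ^n · [x^n]( G∘H )(x), where G(z) = Σ_{l≥1} (|g_l|/w_l) z^l and H(x) = Σ_{k≥1} (|h_k|/m_k) x^k. -/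
/-!
Bound the coefficient termwise by the triangle inequality. For a composition `k₁ + ⋯ + k_l = n`
the weight hypothesis says `w_l ∏ m_{k_i} ≤ λⁿ m_n`, so the term `|g_l| ∏ |h_{k_i}|` is at most
`λⁿ m_n · (|g_l| / w_l) ∏ (|h_{k_i}| / m_{k_i})`, which is `λⁿ m_n` times the matching term of `G ∘ H`.
-/

open Finset

namespace Composition

variable {n : ℕ}

theorem prod_map_blocks {M : Type*} [CommMonoid M] (p : Composition n) (f : ℕ → M) :
    (p.blocks.map f).prod = ∏ i, f (p.blocksFun i) := by
  rw [← p.ofFn_blocksFun, List.map_ofFn, List.prod_ofFn]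
  rfl

theorem blocks_ne_nil (p : Composition n) (hn : 0 < n) : p.blocks ≠ [] :=
  List.ne_nil_of_length_pos (p.blocks_length ▸ p.length_pos_of_pos hn)

theorem weight_mul_prod_blocksFun_le {w m : ℕ → ℝ} {lam : ℝ}
    (hyp : ∀ ks : List ℕ, ks ≠ [] → (∀ i ∈ ks, 1 ≤ i) →
      w ks.length * (ks.map m).prod ≤ lam ^ ks.sum * m ks.sum)
    (p : Composition n) (hn : 0 < n) :
    w p.length * ∏ i, m (p.blocksFun i) ≤ lam ^ n * m n := by
  have := hyp p.blocks (p.blocks_ne_nil hn) fun _ hi => p.one_le_blocks hi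
  rwa [p.blocks_sum, p.blocks_length, p.prod_map_blocks] at this

end Composition

theorem mul_le_mul_div_mul_div {a b W M K : ℝ} (ha : 0 ≤ a) (hb : 0 ≤ b)
    (hW : 0 < W) (hM : 0 < M) (hK : W * M ≤ K) :
    a * b ≤ K * (a / W * (b / M)) := by
  calc a * b = W * M * (a / W * (b / M)) := by field_simp
    _ ≤ K * (a / W * (b / M)) := by gcongr

theorem stmt_14_general (g h : ℕ → ℂ) (w m : ℕ → ℝ)
    (hw : ∀ n, 1 ≤ n → 0 < w n) (hm : ∀ n, 1 ≤ n → 0 < m n)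
    (lam : ℝ)
    (hyp : ∀ ks : List ℕ, ks ≠ [] → (∀ i ∈ ks, 1 ≤ i) →
      w ks.length * (ks.map m).prod ≤ lam ^ ks.sum * m ks.sum)
    (n : ℕ) (hn : 1 ≤ n) :
    ‖∑ p : Composition n, g p.length * ∏ i, h (p.blocksFun i)‖ / m n ≤
      lam ^ n * ∑ p : Composition n,
        (‖g p.length‖ / w p.length) *
          ∏ i, ‖h (p.blocksFun i)‖ / m (p.blocksFun i) := by
  rw [div_le_iff₀ (hm n hn), mul_sum, sum_mul]
  refine (norm_sum_le _ _).trans (sum_le_sum fun p _ => ?_)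
  have hW : 0 < w p.length := hw _ (p.length_pos_of_pos hn)
  have hM : 0 < ∏ i, m (p.blocksFun i) := prod_pos fun i _ => hm _ (p.one_le_blocksFun i)
  have key := mul_le_mul_div_mul_div (norm_nonneg (g p.length))
    (prod_nonneg (s := univ) fun i _ => norm_nonneg (h (p.blocksFun i))) hW hM
    (p.weight_mul_prod_blocksFun_le hyp hn)
  rw [norm_mul, norm_prod, prod_div_distrib]
  linarith

/-- Main composition lemma for formal power series (one-dimensional case):
if `w_l m_{k₁} ⋯ m_{k_l} ≤ λ^k m_k` whenever `k₁ + ⋯ + k_l = k`, then the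
coefficients of `g ∘ h` are majorized by those of `G ∘ H` composed with `λ x`. -/
theorem stmt_14 (g h : ℕ → ℂ) (w m : ℕ → ℝ)
    (hw : ∀ n, 1 ≤ n → 0 < w n) (hm : ∀ n, 1 ≤ n → 0 < m n)
    (lam : ℝ) (hlam : 1 ≤ lam)
    (hyp : ∀ ks : List ℕ, ks ≠ [] → (∀ i ∈ ks, 1 ≤ i) →
      w ks.length * (ks.map m).prod ≤ lam ^ ks.sum * m ks.sum)
    (n : ℕ) (hn : 1 ≤ n) :
    ‖∑ p : Composition n, g p.length * ∏ i, h (p.blocksFun i)‖ / m n ≤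
      lam ^ n * ∑ p : Composition n,
        (‖g p.length‖ / w p.length) *
          ∏ i, ‖h (p.blocksFun i)‖ / m (p.blocksFun i) :=
  stmt_14_general g h w m hw hm lam hyp n hn
end

section
/- (Composition closure, formal version.) If a weight m is FdB with constant λ, then for formal power series g, h over ℂ without constant term, the coefficients of g∘h satisfy |(g∘h)_n| / m_n ≤ λ^n Σ_{l≥1} (|g_l|/m_l) ρ_l(n), where ρ_l(n) = Σ_{k_1+⋯+k_l=n, k_i≥1} Π (|h_{k_i}|/m_{k_i}); consequently, if Σ_n (|g_n|/m_n) r^n < ∞ and Σ_n (|h_n|/m_n) (λr')^n ≤ ρ < r for some r, r' > 0, then Σ_n (|(g∘h)_n|/m_n) (r')^n ≤ Σ_l (|g_l|/m_l) ρ^l < ∞. -/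
/-!
Bounding each composition term and using the FdB inequality `m_l ∏ m_{k_i} ≤ λ^n m_n` gives
the coefficient bound. Multiplying it by `r'^n = ∏ r'^{k_i}` and summing over `n`, the map sending
a composition to its length and tuple of blocks is injective, so the double sum is dominated by
`∑_l (|g_l|/m_l) (∑_k (|h_k|/m_k) (λr')^k)^l ≤ ∑_l (|g_l|/m_l) ρ^l`. The comparison is made in
`ℝ≥0∞`, where no summability has to be established in advance.
-/

open scoped ENNReal

def IsFdBWeight (m : ℕ → ℝ) (lam : ℝ) : Prop :=
  ∀ ks : List ℕ, ks ≠ [] → (∀ i ∈ ks, 1 ≤ i) →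
    m ks.length * (ks.map m).prod ≤ lam ^ ks.sum * m ks.sum

theorem IsFdBWeight.mul_prod_blocksFun_le {m : ℕ → ℝ} {lam : ℝ} (hfdb : IsFdBWeight m lam)
    {n : ℕ} (hn : 1 ≤ n) (p : Composition n) :
    m p.length * ∏ i, m (p.blocksFun i) ≤ lam ^ n * m n := by
  have hne : p.blocks ≠ [] :=
    List.ne_nil_of_length_pos (p.blocks_length ▸ p.length_pos_of_pos hn)
  have := hfdb p.blocks hne fun i hi => p.one_le_blocks hi
  rwa [← p.ofFn_blocksFun, List.map_ofFn, List.prod_ofFn, List.length_ofFn, List.sum_ofFn,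
    p.sum_blocksFun] at this

theorem Composition.sum_eq_sum_Icc_sum_length_eq {M : Type*} [AddCommMonoid M] {n : ℕ}
    (hn : 1 ≤ n) (f : Composition n → M) :
    ∑ p, f p = ∑ l ∈ Finset.Icc 1 n, ∑ p with p.length = l, f p :=
  (Finset.sum_fiberwise_of_maps_to (fun p _ => Finset.mem_Icc.2
    ⟨p.length_pos_of_pos hn, p.length_le⟩) f).symm

theorem norm_sum_compositions_div_le {R : Type*} [NormedCommRing R] [NormOneClass R]
    {m : ℕ → ℝ} {lam : ℝ} (hm : ∀ n, 1 ≤ n → 0 < m n) (hfdb : IsFdBWeight m lam)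
    (g h : ℕ → R) {n : ℕ} (hn : 1 ≤ n) :
    ‖∑ p : Composition n, g p.length * ∏ i, h (p.blocksFun i)‖ / m n ≤
      lam ^ n * ∑ p : Composition n,
        ‖g p.length‖ / m p.length * ∏ i, ‖h (p.blocksFun i)‖ / m (p.blocksFun i) := by
  rw [div_le_iff₀ (hm n hn), Finset.mul_sum, Finset.sum_mul]
  refine (norm_sum_le _ _).trans (Finset.sum_le_sum fun p _ => ?_)
  have hml : 0 < m p.length := hm _ (p.length_pos_of_pos hn)
  have hmb : ∀ i, 0 < m (p.blocksFun i) := fun i => hm _ (p.one_le_blocksFun i)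
  set B := ‖g p.length‖ / m p.length * ∏ i, ‖h (p.blocksFun i)‖ / m (p.blocksFun i)
  have hB : 0 ≤ B := mul_nonneg (div_nonneg (norm_nonneg _) hml.le)
    (Finset.prod_nonneg fun i _ => div_nonneg (norm_nonneg _) (hmb i).le)
  calc ‖g p.length * ∏ i, h (p.blocksFun i)‖
      ≤ ‖g p.length‖ * ∏ i, ‖h (p.blocksFun i)‖ :=
        (norm_mul_le _ _).trans (by gcongr; exact Finset.norm_prod_le _ _)
    _ = B * (m p.length * ∏ i, m (p.blocksFun i)) := by
        simp only [B, div_eq_mul_inv, Finset.prod_mul_distrib, Finset.prod_inv_distrib]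
        field_simp [(Finset.prod_pos fun i _ => hmb i).ne']
    _ ≤ B * (lam ^ n * m n) := mul_le_mul_of_nonneg_left (hfdb.mul_prod_blocksFun_le hn p) hB
    _ = lam ^ n * B * m n := by ring

theorem norm_sum_compositions_div_mul_pow_le {R : Type*} [NormedCommRing R] [NormOneClass R]
    {m : ℕ → ℝ} {lam : ℝ} (hm : ∀ n, 1 ≤ n → 0 < m n) (hfdb : IsFdBWeight m lam)
    (g h : ℕ → R) {n : ℕ} (hn : 1 ≤ n) {r : ℝ} (hr : 0 ≤ r) :
    ‖∑ p : Composition n, g p.length * ∏ i, h (p.blocksFun i)‖ / m n * r ^ n ≤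
      ∑ p : Composition n, ‖g p.length‖ / m p.length *
        ∏ i, ‖h (p.blocksFun i)‖ / m (p.blocksFun i) * (lam * r) ^ p.blocksFun i := by
  calc ‖∑ p : Composition n, g p.length * ∏ i, h (p.blocksFun i)‖ / m n * r ^ n
      ≤ lam ^ n * (∑ p : Composition n, ‖g p.length‖ / m p.length *
          ∏ i, ‖h (p.blocksFun i)‖ / m (p.blocksFun i)) * r ^ n := by
        gcongr
        exact norm_sum_compositions_div_le hm hfdb g h hn
    _ = ∑ p : Composition n, ‖g p.length‖ / m p.length *
          ∏ i, ‖h (p.blocksFun i)‖ / m (p.blocksFun i) * (lam * r) ^ p.blocksFun i := by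
        simp only [Finset.prod_mul_distrib, Finset.prod_pow_eq_pow_sum, Composition.sum_blocksFun,
          Finset.mul_sum, Finset.sum_mul, mul_pow]
        exact Finset.sum_congr rfl fun p _ => by ring

theorem ENNReal.tsum_prod_fin_eq_pow (φ : ℕ → ℝ≥0∞) (l : ℕ) :
    ∑' t : Fin l → ℕ, ∏ i, φ (t i) = (∑' k, φ k) ^ l := by
  induction l with
  | zero => simp
  | succ l ih =>
    rw [← (Fin.consEquiv fun _ => ℕ).tsum_eq, ENNReal.tsum_prod', pow_succ', ← ih,
      ← ENNReal.tsum_mul_right]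
    refine tsum_congr fun k => ?_
    rw [← ENNReal.tsum_mul_left]
    refine tsum_congr fun t => ?_
    simp [Fin.prod_univ_succ, Fin.consEquiv]

theorem Composition.sigma_length_blocksFun_injective :
    Function.Injective fun q : Σ n, Composition n =>
      (⟨q.2.length, q.2.blocksFun⟩ : Σ l, Fin l → ℕ) := by
  rintro ⟨n, p⟩ ⟨n', p'⟩ h
  refine Composition.sigma_eq_iff_blocks_eq.2 ?_
  rw [← p.ofFn_blocksFun, ← p'.ofFn_blocksFun]
  exact List.ofFn_inj'.2 h

theorem ENNReal.tsum_sum_compositions_le (b φ : ℕ → ℝ≥0∞) :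
    ∑' n, ∑ p : Composition n, b p.length * ∏ i, φ (p.blocksFun i) ≤
      ∑' l, b l * (∑' k, φ k) ^ l := by
  calc ∑' n, ∑ p : Composition n, b p.length * ∏ i, φ (p.blocksFun i)
      = ∑' q : Σ n, Composition n, b q.2.length * ∏ i, φ (q.2.blocksFun i) := by
        rw [ENNReal.tsum_sigma']
        exact tsum_congr fun n => (tsum_fintype _).symm
    _ ≤ ∑' s : Σ l, Fin l → ℕ, b s.1 * ∏ i, φ (s.2 i) :=
        ENNReal.tsum_comp_le_tsum_of_injective Composition.sigma_length_blocksFun_injective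
          (fun s : Σ l, Fin l → ℕ => b s.1 * ∏ i, φ (s.2 i))
    _ = ∑' l, b l * (∑' k, φ k) ^ l := by
        simp only [ENNReal.tsum_sigma', ENNReal.tsum_mul_left, ENNReal.tsum_prod_fin_eq_pow]

theorem summable_and_tsum_le_of_tsum_ofReal_le {α : Type*} {f g : α → ℝ} (hf : ∀ a, 0 ≤ f a)
    (hg : ∀ a, 0 ≤ g a) (hgs : Summable g)
    (h : ∑' a, ENNReal.ofReal (f a) ≤ ∑' a, ENNReal.ofReal (g a)) :
    Summable f ∧ ∑' a, f a ≤ ∑' a, g a := by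
  rw [← ENNReal.ofReal_tsum_of_nonneg hg hgs] at h
  have hfs : Summable f := by
    simpa [ENNReal.toReal_ofReal (hf _)] using
      ENNReal.summable_toReal (ne_top_of_le_ne_top ENNReal.ofReal_ne_top h)
  rw [← ENNReal.ofReal_tsum_of_nonneg hf hfs,
    ENNReal.ofReal_le_ofReal_iff (tsum_nonneg hg)] at h
  exact ⟨hfs, h⟩

theorem summable_and_tsum_le_of_le_sum_compositions {f b a : ℕ → ℝ} {ρ : ℝ}
    (hf : ∀ n, 0 ≤ f n) (hb : ∀ l, 0 ≤ b l) (ha : ∀ k, 0 ≤ a k) (has : Summable a)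
    (haρ : ∑' k, a k ≤ ρ) (hbs : Summable fun l => b l * ρ ^ l)
    (hfle : ∀ n, f n ≤ ∑ p : Composition n, b p.length * ∏ i, a (p.blocksFun i)) :
    Summable f ∧ ∑' n, f n ≤ ∑' l, b l * ρ ^ l := by
  have hρ : 0 ≤ ρ := (tsum_nonneg ha).trans haρ
  refine summable_and_tsum_le_of_tsum_ofReal_le hf (fun l => by have := hb l; positivity) hbs ?_
  calc ∑' n, ENNReal.ofReal (f n)
      ≤ ∑' n, ∑ p : Composition n,
          ENNReal.ofReal (b p.length) * ∏ i, ENNReal.ofReal (a (p.blocksFun i)) := by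
        refine ENNReal.tsum_le_tsum fun n => (ENNReal.ofReal_le_ofReal (hfle n)).trans_eq ?_
        rw [ENNReal.ofReal_sum_of_nonneg fun p _ =>
          mul_nonneg (hb _) (Finset.prod_nonneg fun i _ => ha _)]
        refine Finset.sum_congr rfl fun p _ => ?_
        rw [ENNReal.ofReal_mul (hb _), ENNReal.ofReal_prod_of_nonneg fun i _ => ha _]
    _ ≤ ∑' l, ENNReal.ofReal (b l) * (∑' k, ENNReal.ofReal (a k)) ^ l :=
        ENNReal.tsum_sum_compositions_le _ _
    _ ≤ ∑' l, ENNReal.ofReal (b l * ρ ^ l) := by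
        rw [← ENNReal.ofReal_tsum_of_nonneg ha has]
        refine ENNReal.tsum_le_tsum fun l => ?_
        rw [ENNReal.ofReal_mul (hb l), ENNReal.ofReal_pow hρ]
        gcongr

/-- Composition closure, formal version: for an FdB weight `m` and formal power
series `g`, `h` without constant term, the coefficients of `g ∘ h` are
controlled, and the weighted majorant series of `g ∘ h` converges whenever the
majorants of `g` and `h` do (with appropriately related radii). -/
theorem stmt_15 (m : ℕ → ℝ) (hm : ∀ n, 1 ≤ n → 0 < m n)
    (lam : ℝ) (hlam : 1 ≤ lam)
    (hfdb : ∀ ks : List ℕ, ks ≠ [] → (∀ i ∈ ks, 1 ≤ i) →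
      m ks.length * (ks.map m).prod ≤ lam ^ ks.sum * m ks.sum)
    (g h : ℕ → ℂ) (hg0 : g 0 = 0) (hh0 : h 0 = 0)
    (c : ℕ → ℂ)
    (hc : ∀ n : ℕ, c n = ∑ p : Composition n, g p.length * ∏ i, h (p.blocksFun i))
    (ρfun : ℕ → ℕ → ℝ)
    (hρfun : ∀ l n : ℕ, ρfun l n =
      ∑ p ∈ Finset.univ.filter (fun p : Composition n => p.length = l),
        ∏ i, ‖h (p.blocksFun i)‖ / m (p.blocksFun i)) :
    (∀ n, 1 ≤ n → ‖c n‖ / m n ≤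
      lam ^ n * ∑ l ∈ Finset.Icc 1 n, (‖g l‖ / m l) * ρfun l n) ∧
    (∀ r r' ρ : ℝ, 0 < r' → 0 ≤ ρ → ρ < r →
      Summable (fun n : ℕ => ‖g n‖ / m n * r ^ n) →
      Summable (fun n : ℕ => ‖h n‖ / m n * (lam * r') ^ n) →
      (∑' n : ℕ, ‖h n‖ / m n * (lam * r') ^ n) ≤ ρ →
      Summable (fun n : ℕ => ‖c n‖ / m n * r' ^ n) ∧
      (∑' n : ℕ, ‖c n‖ / m n * r' ^ n) ≤
        ∑' l : ℕ, ‖g l‖ / m l * ρ ^ l) := by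
  have hweight {u : ℕ → ℂ} (hu : u 0 = 0) (k : ℕ) : 0 ≤ ‖u k‖ / m k := by
    rcases k.eq_zero_or_pos with rfl | hk
    · simp [hu]
    · exact div_nonneg (norm_nonneg _) (hm k hk).le
  have hc0 : c 0 = 0 :=
    (hc 0).trans <| Finset.sum_eq_zero fun p _ => by
      rw [show g p.length = 0 by rw [Nat.le_zero.1 p.length_le, hg0], zero_mul]
  refine ⟨fun n hn => ?_, fun r r' ρ hr' hρ hρr hgs hhs hhρ => ?_⟩
  · rw [hc]
    refine (norm_sum_compositions_div_le hm hfdb g h hn).trans_eq ?_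
    rw [Composition.sum_eq_sum_Icc_sum_length_eq hn]
    refine congrArg _ (Finset.sum_congr rfl fun l _ => ?_)
    rw [hρfun, Finset.mul_sum]
    exact Finset.sum_congr rfl fun p hp => by obtain rfl := (Finset.mem_filter.1 hp).2; rfl
  have hx : 0 ≤ lam * r' := mul_nonneg (zero_le_one.trans hlam) hr'.le
  have ha k : 0 ≤ ‖h k‖ / m k * (lam * r') ^ k := mul_nonneg (hweight hh0 k) (pow_nonneg hx k)
  refine summable_and_tsum_le_of_le_sum_compositions
    (fun n => mul_nonneg (hweight hc0 n) (pow_nonneg hr'.le n)) (hweight hg0) ha hhs hhρ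
    (hgs.of_nonneg_of_le (fun l => mul_nonneg (hweight hg0 l) (pow_nonneg hρ l))
      fun l => by gcongr; exact hweight hg0 l) fun n => ?_
  rcases n.eq_zero_or_pos with rfl | hn
  · simpa [hc0] using Finset.sum_nonneg fun p _ =>
      mul_nonneg (hweight hg0 _) (Finset.prod_nonneg fun i _ => ha (p.blocksFun i))
  rw [hc]
  exact norm_sum_compositions_div_mul_pow_le hm hfdb g h hn hr'.le
end

section
/- (Siegel's counting lemma, abstract form.) Let Ω: {n ≥ 2} → [1,∞) be any nondecreasing function and fix η ≥ 1, s ≥ 1 and eigenvalue data such that for multiindices k > k′ with E_k, E_{k′} > ηΩ(n) one has |k − k′| ≥ n. Define Δ_k by Δ_e = 1 for |e| = 1 and Δ_k = E_k max_{k_1+⋯+k_r = k, r = |l| ≥ 2} Δ_{k_1}⋯Δ_{k_r}, and let N_n(k) be the number of factors E_{l_i} exceeding ηΩ(n) in the resulting product decomposition Δ_k = E_{l_0} E_{l_1}⋯E_{l_t}. Then N_n(k) = 0 if |k| ≤ n, and N_n(k) ≤ 2|k|/n − 1 if |k| > n. -/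
/-!
Call a factor `E_l` big if it exceeds `ηΩ(n)`; since `E_l ≤ Ω(|l|)` and `Ω` is nondecreasing,
a big factor has `|l| > n`. In a tree with root `k` let `N` be the number of big factors,
`m₁, …, m_C` the topmost big nodes (big nodes without a big ancestor) and `T = Σ |m_j| ≤ |k|`.
By induction on the tree, `n (N + C) ≤ 2T`. At a big root `k` the separation property gives
`|m_j| ≤ |k| - n` for the topmost big nodes strictly below `k`, so `T ≤ C (|k| - n)`; together
with `T ≤ |k|` and `n < |k|` this yields `n (N + 2) ≤ 2|k|` whether `C = 0`, `C = 1` or `C ≥ 2`.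
-/

/-- Decomposition trees recording the canonical recursive decomposition
`Δ_k = E_k · Δ_{k₁} ⋯ Δ_{k_r}` of the small-divisor products: a leaf carries a
multiindex of length 1 (where `Δ_e = 1`), and a node carries a multiindex `k`
together with the subtrees for the parts `k₁, …, k_r` of the chosen
decomposition `k = k₁ + ⋯ + k_r`, `r ≥ 2`. -/
inductive DecompTree (s : ℕ) : Type
  | leaf : (Fin s → ℕ) → DecompTree s
  | node : (Fin s → ℕ) → List (DecompTree s) → DecompTree s

namespace DecompTree

variable {s : ℕ}

/-- The multiindex at the root of the tree. -/
def root : DecompTree s → (Fin s → ℕ)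
  | leaf k => k
  | node k _ => k

/-- The multiindices `l₀, l₁, …, l_t` of the factors `E_{l_i}` appearing in the
product decomposition `Δ_k = E_{l₀} E_{l₁} ⋯ E_{l_t}` recorded by the tree
(leaves contribute no factor, since `Δ_e = 1`). -/
def factors : DecompTree s → List (Fin s → ℕ)
  | leaf _ => []
  | node k ts => k :: ts.attach.flatMap (fun t => factors t.1)
  decreasing_by
    have := List.sizeOf_lt_of_mem t.2
    simp only [DecompTree.node.sizeOf_spec]
    omega

/-- A tree is a valid decomposition tree if leaves carry multiindices of length
one, and each node has at least two children whose roots sum to the node's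
multiindex. -/
def Valid : DecompTree s → Prop
  | leaf k => (∑ i, k i) = 1
  | node k ts => 2 ≤ ts.length ∧ (ts.map root).sum = k ∧ ∀ t ∈ ts.attach, Valid t.1
  decreasing_by
    have := List.sizeOf_lt_of_mem t.2
    simp only [DecompTree.node.sizeOf_spec]
    omega

end DecompTree

theorem List.lt_sum_of_mem_of_one_le {l : List ℕ} (h1 : ∀ x ∈ l, 1 ≤ x)
    (h2 : 2 ≤ l.length) {a : ℕ} (ha : a ∈ l) : a < l.sum := by
  have hlen : 1 ≤ (l.erase a).length := by
    rw [List.length_erase_of_mem ha]; omega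
  have := List.length_le_sum_of_one_le (l.erase a) fun x hx => h1 x (List.mem_of_mem_erase hx)
  rw [← List.sum_erase ha]
  omega

theorem Finset.sum_list_sum_apply {ι M : Type*} [Fintype ι] [AddCommMonoid M]
    (l : List (ι → M)) : ∑ i, l.sum i = (l.map fun k => ∑ i, k i).sum := by
  induction l with
  | nil => simp
  | cons k l ih => simp [Finset.sum_add_distrib, ih]

theorem List.sum_map_flatMap {α β M : Type*} [AddCommMonoid M] (l : List α)
    (f : α → List β) (g : β → M) :
    ((l.flatMap f).map g).sum = (l.map fun a => ((f a).map g).sum).sum := by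
  induction l with
  | nil => simp
  | cons a l ih => simp [ih]

theorem Nat.mul_add_two_le_of_le_mul_sub {n N C T S : ℕ} (h : n * (N + C) ≤ 2 * T) (hTS : T ≤ S)
    (hTC : T ≤ C * (S - n)) (hnS : n ≤ S) : n * (N + 2) ≤ 2 * S := by
  rcases C with _ | _ | C
  · nlinarith
  · have : T + n ≤ S := by omega
    nlinarith
  · nlinarith

namespace DecompTree

variable {s : ℕ}

@[elab_as_elim, induction_eliminator]
theorem induction {motive : DecompTree s → Prop} (leaf : ∀ k, motive (leaf k))
    (node : ∀ k ts, (∀ t ∈ ts, motive t) → motive (node k ts)) : ∀ t, motive t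
  | .leaf k => leaf k
  | .node k ts => node k ts fun t _ => induction leaf node t
termination_by t => sizeOf t
decreasing_by
  have := List.sizeOf_lt_of_mem ‹t ∈ ts›
  simp only [DecompTree.node.sizeOf_spec]
  omega

@[simp]
theorem factors_leaf (k : Fin s → ℕ) : factors (leaf k) = [] := by
  rw [factors]

@[simp]
theorem factors_node (k : Fin s → ℕ) (ts : List (DecompTree s)) :
    factors (node k ts) = k :: ts.flatMap factors := by
  rw [factors]
  conv_rhs => rw [← List.attach_map_subtype_val ts, List.flatMap_map]

@[simp]
theorem valid_leaf (k : Fin s → ℕ) : Valid (leaf k) ↔ ∑ i, k i = 1 := by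
  rw [Valid]

@[simp]
theorem valid_node (k : Fin s → ℕ) (ts : List (DecompTree s)) :
    Valid (node k ts) ↔ 2 ≤ ts.length ∧ (ts.map root).sum = k ∧ ∀ t ∈ ts, Valid t := by
  rw [Valid]
  simp

theorem sum_eq_sum_sum_root {k : Fin s → ℕ} {ts : List (DecompTree s)}
    (h : (ts.map root).sum = k) : ∑ i, k i = (ts.map fun t => ∑ i, t.root i).sum := by
  rw [← h, Finset.sum_list_sum_apply, List.map_map]
  rfl

theorem length_le_sum_of_one_le_sum_root {k : Fin s → ℕ} {ts : List (DecompTree s)}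
    (h : (ts.map root).sum = k) (hts : ∀ t ∈ ts, 1 ≤ ∑ i, t.root i) : ts.length ≤ ∑ i, k i := by
  rw [sum_eq_sum_sum_root h, ← List.length_map (f := fun t => ∑ i, t.root i)]
  exact List.length_le_sum_of_one_le _ (by simpa using hts)

theorem Valid.one_le_sum_root {t : DecompTree s} (ht : t.Valid) : 1 ≤ ∑ i, t.root i := by
  induction t with
  | leaf k => simp [root, (valid_leaf k).1 ht]
  | node k ts ih =>
    obtain ⟨hlen, hsum, hts⟩ := (valid_node k ts).1 ht
    have := length_le_sum_of_one_le_sum_root hsum fun t h => ih t h (hts t h)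
    simp only [root]
    omega

theorem Valid.two_le_sum_of_node {k : Fin s → ℕ} {ts : List (DecompTree s)}
    (ht : (node k ts).Valid) : 2 ≤ ∑ i, k i := by
  obtain ⟨hlen, hsum, hts⟩ := (valid_node k ts).1 ht
  have := length_le_sum_of_one_le_sum_root hsum fun t h => (hts t h).one_le_sum_root
  omega

theorem Valid.root_lt_of_mem {k : Fin s → ℕ} {ts : List (DecompTree s)} (ht : (node k ts).Valid)
    {t : DecompTree s} (hmem : t ∈ ts) : t.root < k := by
  obtain ⟨hlen, hsum, hts⟩ := (valid_node k ts).1 ht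
  have hle : t.root ≤ k := hsum ▸ List.le_sum_of_mem (List.mem_map_of_mem hmem)
  refine lt_of_le_of_ne hle fun heq => ?_
  have := List.lt_sum_of_mem_of_one_le (l := ts.map fun t => ∑ i, t.root i)
    (by simpa using fun t h => (hts t h).one_le_sum_root) (by simpa using hlen)
    (List.mem_map_of_mem hmem)
  rw [← sum_eq_sum_sum_root hsum, heq] at this
  exact lt_irrefl _ this

theorem Valid.of_mem {k : Fin s → ℕ} {ts : List (DecompTree s)} (ht : (node k ts).Valid)
    {t : DecompTree s} (hmem : t ∈ ts) : t.Valid :=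
  ((valid_node k ts).1 ht).2.2 t hmem

theorem Valid.le_root_of_mem_factors {t : DecompTree s} (ht : t.Valid) {m : Fin s → ℕ}
    (hm : m ∈ t.factors) : m ≤ t.root := by
  induction t with
  | leaf k => simp at hm
  | node k ts ih =>
    obtain rfl | ⟨c, hc, hmc⟩ : m = k ∨ ∃ c ∈ ts, m ∈ c.factors := by simpa using hm
    · exact le_rfl
    · exact (ih c hc (ht.of_mem hc) hmc).trans (ht.root_lt_of_mem hc).le

theorem Valid.two_le_sum_of_mem_factors {t : DecompTree s} (ht : t.Valid) {m : Fin s → ℕ}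
    (hm : m ∈ t.factors) : 2 ≤ ∑ i, m i := by
  induction t with
  | leaf k => simp at hm
  | node k ts ih =>
    obtain rfl | ⟨c, hc, hmc⟩ : m = k ∨ ∃ c ∈ ts, m ∈ c.factors := by simpa using hm
    · exact ht.two_le_sum_of_node
    · exact ih c hc (ht.of_mem hc) hmc

def topFactors (p : (Fin s → ℕ) → Bool) : DecompTree s → List (Fin s → ℕ)
  | leaf _ => []
  | node k ts => if p k then [k] else ts.attach.flatMap fun t => topFactors p t.1
  decreasing_by
    have := List.sizeOf_lt_of_mem t.2
    simp only [DecompTree.node.sizeOf_spec]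
    omega

variable (p : (Fin s → ℕ) → Bool)

@[simp]
theorem topFactors_leaf (k : Fin s → ℕ) : topFactors p (leaf k) = [] := by
  rw [topFactors]

@[simp]
theorem topFactors_node (k : Fin s → ℕ) (ts : List (DecompTree s)) :
    topFactors p (node k ts) = if p k then [k] else ts.flatMap (topFactors p) := by
  rw [topFactors]
  conv_rhs => rw [← List.attach_map_subtype_val ts, List.flatMap_map]

theorem pred_of_mem_topFactors {t : DecompTree s} {m : Fin s → ℕ} (hm : m ∈ topFactors p t) :
    p m := by
  induction t with
  | leaf k => simp at hm
  | node k ts ih =>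
    by_cases hk : p k
    · simp_all
    · rw [topFactors_node, if_neg hk, List.mem_flatMap] at hm
      obtain ⟨c, hc, hmc⟩ := hm
      exact ih c hc hmc

theorem Valid.le_root_of_mem_topFactors {t : DecompTree s} (ht : t.Valid) {m : Fin s → ℕ}
    (hm : m ∈ topFactors p t) : m ≤ t.root := by
  induction t with
  | leaf k => simp at hm
  | node k ts ih =>
    by_cases hk : p k
    · simp_all [root]
    · rw [topFactors_node, if_neg hk, List.mem_flatMap] at hm
      obtain ⟨c, hc, hmc⟩ := hm
      exact (ih c hc (ht.of_mem hc) hmc).trans (ht.root_lt_of_mem hc).le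

theorem sum_flatMap_topFactors_le {k : Fin s → ℕ} {ts : List (DecompTree s)}
    (hsum : (ts.map root).sum = k)
    (hts : ∀ t ∈ ts, ((topFactors p t).map fun m => ∑ i, m i).sum ≤ ∑ i, t.root i) :
    ((ts.flatMap (topFactors p)).map fun m => ∑ i, m i).sum ≤ ∑ i, k i := by
  rw [List.sum_map_flatMap, sum_eq_sum_sum_root hsum]
  exact List.sum_le_sum hts

theorem Valid.sum_topFactors_le {t : DecompTree s} (ht : t.Valid) :
    ((topFactors p t).map fun m => ∑ i, m i).sum ≤ ∑ i, t.root i := by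
  induction t with
  | leaf k => simp
  | node k ts ih =>
    by_cases hk : p k
    · simp [hk, root]
    · rw [topFactors_node, if_neg hk]
      exact sum_flatMap_topFactors_le p ((valid_node k ts).1 ht).2.1 fun c hc => ih c hc (ht.of_mem hc)

theorem Valid.mul_countP_add_length_topFactors_le {n : ℕ}
    (hbig : ∀ k : Fin s → ℕ, 2 ≤ ∑ i, k i → p k → n < ∑ i, k i)
    (hsep : ∀ k k' : Fin s → ℕ, k' < k → p k → p k' → n ≤ ∑ i, k i - ∑ i, k' i)
    {t : DecompTree s} (ht : t.Valid) :
    n * (t.factors.countP p + (topFactors p t).length) ≤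
      2 * ((topFactors p t).map fun m => ∑ i, m i).sum := by
  induction t with
  | leaf k => simp
  | node k ts ih =>
    have hforest : n * ((ts.flatMap factors).countP p + (ts.flatMap (topFactors p)).length) ≤
        2 * ((ts.flatMap (topFactors p)).map fun m => ∑ i, m i).sum := by
      rw [List.countP_flatMap, List.length_flatMap, List.sum_map_flatMap, ← List.sum_map_add,
        ← List.sum_map_mul_left, ← List.sum_map_mul_left]
      exact List.sum_le_sum fun c hc => ih c hc (ht.of_mem hc)
    by_cases hk : p k
    · simp only [factors_node, topFactors_node, hk, List.countP_cons_of_pos, if_true]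
      refine Nat.mul_add_two_le_of_le_mul_sub hforest
        (sum_flatMap_topFactors_le p ((valid_node k ts).1 ht).2.1 fun c hc =>
          (ht.of_mem hc).sum_topFactors_le p) ?_ (hbig k ht.two_le_sum_of_node hk).le
      have hsmall : ∀ m ∈ ts.flatMap (topFactors p), ∑ i, m i ≤ ∑ i, k i - n := by
        intro m hm
        obtain ⟨c, hc, hmc⟩ := List.mem_flatMap.1 hm
        have hmk : m < k := ((ht.of_mem hc).le_root_of_mem_topFactors p hmc).trans_lt
          (ht.root_lt_of_mem hc)
        have := hsep k m hmk hk (pred_of_mem_topFactors p hmc)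
        have : ∑ i, m i ≤ ∑ i, k i := Finset.sum_le_sum fun i _ => hmk.le i
        omega
      refine (List.sum_le_card_nsmul _ _ fun x hx => ?_).trans_eq
        (by rw [List.length_map, smul_eq_mul])
      obtain ⟨m, hm, rfl⟩ := List.mem_map.1 hx
      exact hsmall m hm
    · simpa [hk] using hforest

theorem Valid.countP_factors_eq_zero {n : ℕ}
    (hbig : ∀ k : Fin s → ℕ, 2 ≤ ∑ i, k i → p k → n < ∑ i, k i)
    {t : DecompTree s} (ht : t.Valid) (hle : ∑ i, t.root i ≤ n) : t.factors.countP p = 0 :=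
  List.countP_eq_zero.2 fun m hm hpm => by
    have hmn := hbig m (ht.two_le_sum_of_mem_factors hm) hpm
    have : ∑ i, m i ≤ ∑ i, t.root i :=
      Finset.sum_le_sum fun i _ => ht.le_root_of_mem_factors hm i
    omega

theorem Valid.mul_countP_factors_add_one_le {n : ℕ}
    (hbig : ∀ k : Fin s → ℕ, 2 ≤ ∑ i, k i → p k → n < ∑ i, k i)
    (hsep : ∀ k k' : Fin s → ℕ, k' < k → p k → p k' → n ≤ ∑ i, k i - ∑ i, k' i)
    {t : DecompTree s} (ht : t.Valid) (hn : n ≤ ∑ i, t.root i) :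
    n * (t.factors.countP p + 1) ≤ 2 * ∑ i, t.root i := by
  have hcount := ht.mul_countP_add_length_topFactors_le p hbig hsep
  have hsum := ht.sum_topFactors_le p
  rcases hF : topFactors p t with _ | ⟨m, F⟩
  · simp only [hF, List.length_nil, add_zero, List.map_nil, List.sum_nil, mul_zero,
      nonpos_iff_eq_zero] at hcount
    rw [mul_add_one, hcount]
    omega
  · rw [hF] at hcount hsum
    calc n * (t.factors.countP p + 1)
        ≤ n * (t.factors.countP p + (m :: F).length) := by gcongr; simp
      _ ≤ 2 * ∑ i, t.root i := by omega

end DecompTree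

open DecompTree in
/-- Siegel's counting lemma, abstract form: let `Ω` be nondecreasing with
`E k ≤ Ω |k|`, and suppose (Siegel's separation property) that any two nested
multiindices `k' < k` whose divisors both exceed `η Ω n` satisfy
`|k| - |k'| ≥ n`. Then the number `N_n(k)` of factors exceeding `η Ω n` in the
decomposition of `Δ_k` is `0` if `|k| ≤ n`, and at most `2|k|/n − 1` if
`|k| > n`. -/
theorem stmt_18 (s : ℕ) (E : (Fin s → ℕ) → ℝ) (Ω : ℕ → ℝ) (η : ℝ)
    (hΩ1 : ∀ n, 2 ≤ n → 1 ≤ Ω n)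
    (hΩmono : ∀ n n', 2 ≤ n → n ≤ n' → Ω n ≤ Ω n')
    (hη : 1 ≤ η)
    (hE : ∀ k : Fin s → ℕ, 2 ≤ ∑ i, k i → E k ≤ Ω (∑ i, k i))
    (hsep : ∀ n, 2 ≤ n → ∀ k k' : Fin s → ℕ, (∀ i, k' i ≤ k i) → k' ≠ k →
      η * Ω n < E k → η * Ω n < E k' → n ≤ (∑ i, k i) - (∑ i, k' i))
    (t : DecompTree s) (ht : DecompTree.Valid t) (n : ℕ) (hn : 2 ≤ n) :
    ((∑ i, DecompTree.root t i) ≤ n →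
      (DecompTree.factors t).countP (fun l => decide (η * Ω n < E l)) = 0) ∧
    (n < ∑ i, DecompTree.root t i →
      ((DecompTree.factors t).countP (fun l => decide (η * Ω n < E l)) : ℝ) ≤
        2 * (∑ i, DecompTree.root t i) / n - 1) := by
  have hbig (k : Fin s → ℕ) (hk : 2 ≤ ∑ i, k i) (hEk : decide (η * Ω n < E k)) :
      n < ∑ i, k i := by
    by_contra! hkn
    have hΩn : 0 ≤ Ω n := zero_le_one.trans (hΩ1 n hn)
    have := (hE k hk).trans (hΩmono _ _ hk hkn)
    nlinarith [decide_eq_true_iff.1 hEk]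
  have hsep' (k k' : Fin s → ℕ) (hlt : k' < k) (hk : decide (η * Ω n < E k))
      (hk' : decide (η * Ω n < E k')) : n ≤ ∑ i, k i - ∑ i, k' i :=
    hsep n hn k k' hlt.le hlt.ne (decide_eq_true_iff.1 hk) (decide_eq_true_iff.1 hk')
  refine ⟨ht.countP_factors_eq_zero _ hbig, fun hlt => ?_⟩
  have hcount := ht.mul_countP_factors_add_one_le _ hbig hsep' hlt.le
  have hn0 : (0 : ℝ) < n := Nat.cast_pos.2 (by omega)
  rw [le_sub_iff_add_le, le_div_iff₀ hn0]
  exact_mod_cast (by linarith : (t.factors.countP _ + 1) * n ≤ 2 * ∑ i, t.root i)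
end
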